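/- Let λ ∈ (0,1), m, n ∈ ℝ, and u ∈ (0,1), and set F = (1+λ)u − λu² (which lies in (0,1)). Then F^m (1−F)^n = Σ_{i=0}^∞ (−1)^i C(n,i) · Σ_{j=0}^∞ (−1)^j C(m+i, j) λ^j (1+λ)^{m+i−j} u^{j+m+i} (iterated sums; both series converge). With u = (1 − exp(−β g(x)^α))^θ this gives the expansion of the integrand F(x)^m (1−F(x))^n of the cumulative information generating function of the GTLD. -/

import Mathlib

/-!
Both series are instances of Newton's binomial series `(1 + x) ^ a = ∑ C(a,k) x ^ k`, `|x| < 1`,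
which Mathlib provides through `binomialSeries`. The outer one is the expansion of `(1 - F) ^ n`
multiplied by `F ^ m`; the inner one comes from the factorisation
`F = (1 + λ) u (1 - λ u / (1 + λ))`, in which `λ u / (1 + λ) < 1`.
-/

open Real

/-- Generalized binomial coefficient `C(a,k) = a(a−1)⋯(a−k+1)/k!`. -/
noncomputable def genChoose (a : ℝ) (k : ℕ) : ℝ :=
  (∏ i ∈ Finset.range k, (a - i)) / (Nat.factorial k)

theorem genChoose_eq_ringChoose (a : ℝ) (k : ℕ) : genChoose a k = Ring.choose a k := by
  rw [Ring.choose_eq_smul, ← Polynomial.aeval_eq_smeval, Polynomial.aeval_def,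
    ← Polynomial.eval_map, descPochhammer_map, descPochhammer_eval_eq_prod_range, smul_eq_mul,
    genChoose, div_eq_inv_mul]

theorem hasSum_genChoose_mul_pow (a : ℝ) {x : ℝ} (hx : |x| < 1) :
    HasSum (fun k : ℕ => genChoose a k * x ^ k) ((1 + x) ^ a) := by
  have h := (one_add_rpow_hasFPowerSeriesOnBall_zero (a := a)).hasSum (y := x)
    (by simpa [edist_dist, Real.dist_eq] using hx)
  simpa only [genChoose_eq_ringChoose, mul_comm, binomialSeries,
    FormalMultilinearSeries.apply_eq_prod_smul_coeff, Finset.prod_const, Finset.card_univ,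
    Fintype.card_fin, FormalMultilinearSeries.coeff_ofScalars, smul_eq_mul, zero_add] using h

theorem hasSum_rpow_mul_one_sub_rpow (m n : ℝ) {F : ℝ} (hF0 : 0 < F) (hF1 : F < 1) :
    HasSum (fun i : ℕ => (-1) ^ i * genChoose n i * F ^ (m + i)) (F ^ m * (1 - F) ^ n) := by
  have hx : |-F| < 1 := by rwa [abs_neg, abs_of_pos hF0]
  have h := (hasSum_genChoose_mul_pow n hx).mul_left (F ^ m)
  rw [← sub_eq_add_neg] at h
  refine h.congr_fun fun i => ?_
  rw [rpow_add hF0, rpow_natCast, neg_pow]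
  ring

theorem hasSum_rpow_mul_sub_mul_sq (c : ℝ) {A B u : ℝ} (hA : 0 < A) (hu : 0 < u)
    (hBu : |B * u| < A) :
    HasSum (fun j : ℕ => (-1) ^ j * genChoose c j * B ^ j * A ^ (c - j) * u ^ ((j : ℝ) + c))
      ((A * u - B * u ^ 2) ^ c) := by
  have hx : |-(B * u / A)| < 1 := by
    rwa [abs_neg, abs_div, abs_of_pos hA, div_lt_one hA]
  have hfactor : A * u - B * u ^ 2 = (1 + -(B * u / A)) * (A * u) := by
    field_simp
    ring
  have h1x : 0 ≤ 1 + -(B * u / A) := by linarith [(abs_lt.1 hx).1]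
  rw [hfactor, mul_rpow h1x (by positivity)]
  refine ((hasSum_genChoose_mul_pow c hx).mul_right _).congr_fun fun j => ?_
  rw [rpow_add hu, rpow_natCast, rpow_sub hA, rpow_natCast, mul_rpow hA.le hu.le,
    neg_pow (B * u / A), div_pow, mul_pow]
  field_simp

theorem one_add_mul_sub_mul_sq_mem_Ioo {lam u : ℝ} (hlam : lam ∈ Set.Icc (-1 : ℝ) 1)
    (hu : u ∈ Set.Ioo (0 : ℝ) 1) : (1 + lam) * u - lam * u ^ 2 ∈ Set.Ioo (0 : ℝ) 1 := by
  obtain ⟨hl0, hl1⟩ := hlam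
  obtain ⟨hu0, hu1⟩ := hu
  constructor
  · nlinarith [mul_nonneg (by linarith : 0 ≤ 1 + lam) (by linarith : 0 ≤ 1 - u)]
  · nlinarith [mul_pos (sub_pos.2 hu1) (by nlinarith : 0 < 1 - lam * u)]

/-- Expansion of the integrand of the cumulative information generating
function of the GTLD: for `λ ∈ (0,1)`, `m n ∈ ℝ`, `u ∈ (0,1)` and
`F = (1+λ)u − λu²`, we have `F ∈ (0,1)` and
`F^m (1−F)^n = Σ_i (−1)^i C(n,i) Σ_j (−1)^j C(m+i,j) λ^j (1+λ)^{m+i−j} u^{j+m+i}`,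
with both series convergent. -/
theorem gtld_cigf_expansion (lam m n u F : ℝ)
    (hlam : lam ∈ Set.Ioo (0 : ℝ) 1) (hu : u ∈ Set.Ioo (0 : ℝ) 1)
    (hF : F = (1 + lam) * u - lam * u ^ 2) :
    F ∈ Set.Ioo (0 : ℝ) 1 ∧
      (∀ i : ℕ,
        Summable (fun j : ℕ =>
          (-1 : ℝ) ^ j * genChoose (m + (i : ℝ)) j * lam ^ j *
            (1 + lam) ^ (m + (i : ℝ) - (j : ℝ)) * u ^ ((j : ℝ) + m + (i : ℝ)))) ∧
      HasSum
        (fun i : ℕ =>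
          (-1 : ℝ) ^ i * genChoose n i *
            ∑' j : ℕ,
              (-1 : ℝ) ^ j * genChoose (m + (i : ℝ)) j * lam ^ j *
                (1 + lam) ^ (m + (i : ℝ) - (j : ℝ)) * u ^ ((j : ℝ) + m + (i : ℝ)))
        (F ^ m * (1 - F) ^ n) := by
  obtain ⟨hl0, hl1⟩ := hlam
  have hF01 : F ∈ Set.Ioo (0 : ℝ) 1 :=
    hF ▸ one_add_mul_sub_mul_sq_mem_Ioo ⟨by linarith, hl1.le⟩ hu
  have hlu : |lam * u| < 1 + lam := by
    rw [abs_of_pos (mul_pos hl0 hu.1)]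
    nlinarith [hu.2]
  have hinner : ∀ i : ℕ, HasSum (fun j : ℕ =>
      (-1 : ℝ) ^ j * genChoose (m + (i : ℝ)) j * lam ^ j *
        (1 + lam) ^ (m + (i : ℝ) - (j : ℝ)) * u ^ ((j : ℝ) + m + (i : ℝ))) (F ^ (m + (i : ℝ))) :=
    fun i => by
      simpa only [hF, ← add_assoc] using
        hasSum_rpow_mul_sub_mul_sq (m + i) (by linarith) hu.1 hlu
  refine ⟨hF01, fun i => (hinner i).summable, ?_⟩
  simpa only [(hinner _).tsum_eq] using hasSum_rpow_mul_one_sub_rpow m n hF01.1 hF01.2
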